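/- Let φ : [1..n] → [1..m] be an injective, label-preserving map (S[i] = L[φ(i)] for all i) from positions of S to positions of L. Define the number of crossings of φ as the number of pairs i < i' with φ(i) > φ(i'). Then δ(S, L) is finite if and only if such a φ exists, and in that case δ(S, L) = (m − n) + min over all such φ of the number of crossings of φ. -/

import Mathlib

open scoped BigOperators

variable {α : Type*} [DecidableEq α]

/-- One correction step: insertion of a symbol at an arbitrary position,
or swap of two adjacent symbols. -/
inductive SIStep : List α → List α → Prop
  | insert (u v : List α) (a : α) : SIStep (u ++ v) (u ++ a :: v)
  | swap (u v : List α) (a b : α) : SIStep (u ++ a :: b :: v) (u ++ b :: a :: v)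

/-- There is a transformation from `S` to `L` using exactly `k` correction steps. -/
def SIReach (S L : List α) (k : ℕ) : Prop :=
  ∃ f : ℕ → List α, f 0 = S ∧ f k = L ∧ ∀ i < k, SIStep (f i) (f (i + 1))

/-- The Swap-Insert Correction distance: the minimum number of insertions and
adjacent swaps transforming `S` into `L`, or `⊤` if no such sequence exists. -/
noncomputable def SIDist (S L : List α) : ℕ∞ :=
  sInf {n : ℕ∞ | ∃ k : ℕ, n = (k : ℕ∞) ∧ SIReach S L k}

/-!
Follow the symbols of `S` through a correction sequence: their final positions form a
label-preserving injection `φ`, recorded as the list `List.ofFn φ` of target positions, whose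
inversions are the crossings of `φ`. Read backwards, an insertion deletes an entry of this list
(no new inversions) and a swap transposes two adjacent entries (at most one new inversion), so a
sequence of length `k` yields `|L| - |S| + crossings φ ≤ k`. Conversely, bubble-sort the list:
each adjacent swap of an inverted pair removes exactly one inversion, and a sorted list exhibits
`S` as a subsequence of `L`, from which `|L| - |S|` insertions reach `L`.
-/

open Finset

namespace List

variable {β : Type*}

theorem countP_ofFn {n : ℕ} (p : β → Bool) (f : Fin n → β) :
    (ofFn f).countP p = #{i | p (f i)} := by
  induction n with
  | zero => simp
  | succ n ih =>
    rw [ofFn_succ, countP_cons, ih, Fin.card_filter_univ_succ]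
    split_ifs <;> rfl

section LT

variable [LT β] [DecidableLT β]

def inversions : List β → ℕ
  | [] => 0
  | x :: l => l.countP (· < x) + l.inversions

@[simp]
theorem inversions_nil : ([] : List β).inversions = 0 := rfl

@[simp]
theorem inversions_cons (x : β) (l : List β) :
    (x :: l).inversions = l.countP (· < x) + l.inversions := rfl

theorem inversions_append_cons_cons (l₁ l₂ : List β) (x y : β) :
    (l₁ ++ x :: y :: l₂).inversions + (if x < y then 1 else 0) =
      (l₁ ++ y :: x :: l₂).inversions + (if y < x then 1 else 0) := by
  induction l₁ with
  | nil =>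
    simp only [nil_append, inversions_cons, countP_cons, decide_eq_true_eq]
    split_ifs <;> omega
  | cons z l₁ ih =>
    have hperm : l₁ ++ x :: y :: l₂ ~ l₁ ++ y :: x :: l₂ := (Perm.swap y x l₂).append_left l₁
    simp only [cons_append, inversions_cons, hperm.countP_eq]
    omega

theorem Sublist.inversions_le {l₁ l₂ : List β} (h : l₁ <+ l₂) :
    l₁.inversions ≤ l₂.inversions := by
  induction h with
  | slnil => rfl
  | cons a _ ih => exact ih.trans (Nat.le_add_left _ _)
  | cons_cons a h ih => exact Nat.add_le_add h.countP_le ih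

end LT

theorem inversions_eq_zero_iff [LinearOrder β] {l : List β} :
    l.inversions = 0 ↔ l.SortedLE := by
  rw [sortedLE_iff_pairwise]
  induction l with
  | nil => simp
  | cons x l ih => simp [countP_eq_zero, ih, pairwise_cons]

end List

section
variable {β : Type*} [LT β] [DecidableLT β]

def crossings {n : ℕ} (φ : Fin n → β) : ℕ :=
  #{p : Fin n × Fin n | p.1 < p.2 ∧ φ p.2 < φ p.1}

theorem crossings_succ {n : ℕ} (φ : Fin (n + 1) → β) :
    crossings φ = #{j : Fin n | φ j.succ < φ 0} + crossings (fun i => φ i.succ) := by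
  simp only [crossings, Finset.card_filter, Fintype.sum_prod_type, Fin.sum_univ_succ,
    Fin.succ_pos, Fin.succ_lt_succ_iff, Fin.not_lt_zero, true_and, false_and, if_false, zero_add]

theorem List.inversions_ofFn {n : ℕ} (φ : Fin n → β) : (List.ofFn φ).inversions = crossings φ := by
  induction n with
  | zero => simp [crossings]
  | succ n ih =>
    rw [List.ofFn_succ, List.inversions_cons, ih, List.countP_ofFn, crossings_succ]
    simp

end

section
open List
variable {α : Type*} {S L X : List α} {k : ℕ}

theorem SIReach.zero_iff : SIReach S L 0 ↔ S = L := by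
  constructor
  · rintro ⟨f, h0, hL, -⟩
    exact h0.symm.trans hL
  · rintro rfl
    exact ⟨fun _ => S, rfl, rfl, by omega⟩

theorem SIReach.succ_iff : SIReach S L (k + 1) ↔ ∃ X, SIStep S X ∧ SIReach X L k := by
  constructor
  · rintro ⟨f, h0, hL, hf⟩
    exact ⟨f 1, h0 ▸ hf 0 k.succ_pos, fun i => f (i + 1), rfl, hL,
      fun i hi => hf (i + 1) (by omega)⟩
  · rintro ⟨X, hSX, f, h0, hL, hf⟩
    refine ⟨fun | 0 => S | i + 1 => f i, rfl, hL, ?_⟩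
    rintro (_ | i) hi
    · simpa [h0] using hSX
    · exact hf i (by omega)

theorem SIStep.cons (a : α) : SIStep S X → SIStep (a :: S) (a :: X)
  | .insert u v b => .insert (a :: u) v b
  | .swap u v b c => .swap (a :: u) v b c

theorem SIReach.cons (a : α) : SIReach S L k → SIReach (a :: S) (a :: L) k
  | ⟨f, h0, hL, hf⟩ => ⟨fun i => a :: f i, by simp [h0], by simp [hL], fun i hi => (hf i hi).cons a⟩

theorem SIReach.of_sublist (h : S <+ L) : SIReach S L (L.length - S.length) := by
  induction h with
  | slnil => exact SIReach.zero_iff.mpr rfl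
  | @cons S L a h ih =>
    rw [List.length_cons, show L.length + 1 - S.length = L.length - S.length + 1 by
      have := h.length_le; omega]
    exact SIReach.succ_iff.mpr ⟨a :: S, SIStep.insert [] S a, ih.cons a⟩
  | @cons_cons S L a _ ih => simpa using ih.cons a

theorem SIStep.exists_map_eq {γ : Type*} [LinearOrder γ] {f : γ → α} {l : List γ}
    (h : SIStep S X) (hl : l.Nodup) (hX : l.map f = X) :
    ∃ l' : List γ, l'.Nodup ∧ l'.map f = S ∧ l'.length ≤ l.length ∧
      l'.inversions + l.length ≤ l.inversions + l'.length + 1 := by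
  cases h with
  | insert u v a =>
    simp only [List.map_eq_append_iff, List.map_eq_cons_iff] at hX
    obtain ⟨l₁, _, rfl, rfl, c, l₂, rfl, rfl, rfl⟩ := hX
    have hsub : l₁ ++ l₂ <+ l₁ ++ c :: l₂ := (List.sublist_cons_self c l₂).append_left l₁
    refine ⟨l₁ ++ l₂, hsub.nodup hl, by simp, hsub.length_le, ?_⟩
    have := hsub.inversions_le
    simp only [List.length_append, List.length_cons]
    omega
  | swap u v a b =>
    simp only [List.map_eq_append_iff, List.map_eq_cons_iff] at hX
    obtain ⟨l₁, _, rfl, rfl, y, _, rfl, rfl, x, l₂, rfl, rfl, rfl⟩ := hX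
    have hperm : l₁ ++ x :: y :: l₂ ~ l₁ ++ y :: x :: l₂ := (List.Perm.swap y x l₂).append_left l₁
    refine ⟨l₁ ++ x :: y :: l₂, hperm.nodup_iff.mpr hl, by simp, hperm.length_eq.le, ?_⟩
    have := List.inversions_append_cons_cons l₁ l₂ x y
    rw [hperm.length_eq]
    split_ifs at this <;> omega

theorem SIReach.exists_nodup_map_get (h : SIReach S L k) :
    ∃ l : List (Fin L.length), l.Nodup ∧ l.map L.get = S ∧
      L.length - S.length + l.inversions ≤ k := by
  induction k generalizing S with
  | zero =>
    obtain rfl := SIReach.zero_iff.mp h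
    refine ⟨List.finRange S.length, List.nodup_finRange _, List.map_get_finRange S, ?_⟩
    simp [List.inversions_eq_zero_iff.mpr (List.sortedLT_finRange _).sortedLE]
  | succ k ih =>
    obtain ⟨X, hSX, hX⟩ := SIReach.succ_iff.mp h
    obtain ⟨l, hl, rfl, hk⟩ := ih hX
    obtain ⟨l', hl', rfl, hlen, hinv⟩ := hSX.exists_map_eq hl rfl
    have hlL : l.length ≤ L.length := by simpa using hl.length_le_card
    refine ⟨l', hl', rfl, ?_⟩
    simp only [List.length_map] at hk ⊢
    omega

theorem SIReach.map_get_of_nodup {l : List (Fin L.length)} (hl : l.Nodup) :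
    SIReach (l.map L.get) L (L.length - l.length + l.inversions) := by
  induction hn : l.inversions generalizing l with
  | zero =>
    have hsub : l <+ List.finRange L.length :=
      List.sublist_of_subperm_of_sortedLE (hl.subperm fun i _ => List.mem_finRange i)
        (List.inversions_eq_zero_iff.mp hn) (List.sortedLT_finRange _).sortedLE
    simpa [List.map_get_finRange] using SIReach.of_sublist (hsub.map L.get)
  | succ n ih =>
    obtain ⟨y, x, ⟨l₁, l₂, rfl⟩, hxy⟩ : ∃ y x, (∃ l₁ l₂, l = l₁ ++ y :: x :: l₂) ∧ x < y := by
      have : ¬ l.SortedLE := fun h => by simp [List.inversions_eq_zero_iff.mpr h] at hn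
      simpa [List.sortedLE_iff_isChain, List.isChain_iff_forall_rel_of_append_cons_cons] using this
    have hperm : l₁ ++ x :: y :: l₂ ~ l₁ ++ y :: x :: l₂ := (List.Perm.swap y x l₂).append_left l₁
    have hinv : (l₁ ++ x :: y :: l₂).inversions = n := by
      have := List.inversions_append_cons_cons l₁ l₂ x y
      simp only [hxy, hxy.not_gt, if_true, if_false] at this
      omega
    rw [← hperm.length_eq, ← add_assoc]
    refine SIReach.succ_iff.mpr ⟨_, ?_, ih (hperm.nodup_iff.mpr hl) hinv⟩
    simpa using SIStep.swap (l₁.map L.get) (l₂.map L.get) (L.get y) (L.get x)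

theorem exists_crossings_eq_iff {c : ℕ} :
    (∃ φ : Fin S.length → Fin L.length, Function.Injective φ ∧
      (∀ i, S.get i = L.get (φ i)) ∧ crossings φ = c) ↔
    ∃ l : List (Fin L.length), l.Nodup ∧ l.map L.get = S ∧ l.inversions = c := by
  constructor
  · rintro ⟨φ, hinj, hlab, rfl⟩
    refine ⟨List.ofFn φ, List.nodup_ofFn.mpr hinj, ?_, List.inversions_ofFn φ⟩
    exact List.ext_get (by simp) fun i _ hi => by simpa using (hlab ⟨i, hi⟩).symm
  · rintro ⟨l, hl, rfl, rfl⟩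
    set φ : Fin (l.map L.get).length → Fin L.length := fun i => l.get (i.cast (List.length_map _))
    have hφ : List.ofFn φ = l := List.ext_get (by simp) (by simp [φ])
    refine ⟨φ, List.nodup_ofFn.mp (hφ.symm ▸ hl), fun i => by simp [φ], ?_⟩
    rw [← List.inversions_ofFn, hφ]

theorem SIReach.exists_embedding (h : SIReach S L k) :
    ∃ φ : Fin S.length → Fin L.length, Function.Injective φ ∧
      (∀ i, S.get i = L.get (φ i)) ∧ L.length - S.length + crossings φ ≤ k := by
  obtain ⟨l, hl, hS, hk⟩ := h.exists_nodup_map_get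
  obtain ⟨φ, hinj, hlab, hφ⟩ := exists_crossings_eq_iff.mpr ⟨l, hl, hS, rfl⟩
  exact ⟨φ, hinj, hlab, hφ ▸ hk⟩

theorem SIReach.of_embedding {φ : Fin S.length → Fin L.length} (hinj : Function.Injective φ)
    (hlab : ∀ i, S.get i = L.get (φ i)) :
    SIReach S L (L.length - S.length + crossings φ) := by
  obtain ⟨l, hl, rfl, hφ⟩ := exists_crossings_eq_iff.mp ⟨φ, hinj, hlab, rfl⟩
  simpa [hφ] using SIReach.map_get_of_nodup hl

theorem siDist_eq_add_sInf_crossings (S L : List α) :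
    SIDist S L = ((L.length - S.length : ℕ) : ℕ∞) +
      sInf {c : ℕ∞ | ∃ φ : Fin S.length → Fin L.length, Function.Injective φ ∧
        (∀ i, S.get i = L.get (φ i)) ∧ c = crossings φ} := by
  apply le_antisymm
  · rw [sInf_eq_iInf, ENat.add_iInf₂]
    refine le_iInf₂ ?_
    rintro _ ⟨φ, hinj, hlab, rfl⟩
    exact sInf_le ⟨_, by push_cast; rfl, SIReach.of_embedding hinj hlab⟩
  · refine le_sInf ?_
    rintro _ ⟨k, rfl, hk⟩
    obtain ⟨φ, hinj, hlab, hle⟩ := hk.exists_embedding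
    calc _ ≤ ((L.length - S.length : ℕ) : ℕ∞) + crossings φ :=
          by gcongr; exact sInf_le ⟨φ, hinj, hlab, rfl⟩
      _ ≤ k := by exact_mod_cast hle

end

/-- `δ(S, L)` is finite iff there is an injective, label-preserving map `φ`
from positions of `S` to positions of `L`, and in that case
`δ(S, L) = (|L| - |S|) +` the minimum number of crossings over all such `φ`,
where a crossing is a pair `i < i'` with `φ i > φ i'`. -/
theorem dist_eq_min_crossings (S L : List α) :
    (SIDist S L ≠ ⊤ ↔
      ∃ φ : Fin S.length → Fin L.length,
        Function.Injective φ ∧ ∀ i, S.get i = L.get (φ i)) ∧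
    (SIDist S L ≠ ⊤ →
      SIDist S L = ((L.length - S.length : ℕ) : ℕ∞) +
        sInf {c : ℕ∞ | ∃ φ : Fin S.length → Fin L.length,
          Function.Injective φ ∧ (∀ i, S.get i = L.get (φ i)) ∧
          c = ((Finset.univ.filter
              (fun p : Fin S.length × Fin S.length =>
                p.1 < p.2 ∧ φ p.2 < φ p.1)).card : ℕ∞)}) := by
  have hdist := siDist_eq_add_sInf_crossings S L
  refine ⟨?_, fun _ => hdist⟩
  rw [hdist, ne_eq, ENat.add_eq_top, sInf_eq_top]
  simp
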